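/- For j > 1, the longest abelian power of period F_j in the Fibonacci infinite word that starts at a position i ≤ F_j has an occurrence starting at position F_j, and its exponent equals ⌊φ F_j + F_{j-1}⌋ - 1, which equals F_{j+1} + F_{j-1} - 1 if j is even and F_{j+1} + F_{j-1} - 2 if j is odd. -/

import Mathlib

open scoped Classical

/-- Fibonacci numbers with the indexing `F 0 = 1`, `F 1 = 1`, `F (j+1) = F j + F (j-1)`. -/
def F (j : ℕ) : ℕ := Nat.fib (j + 1)

/-- The Parikh vector (number of `a`'s, number of `b`'s) of the length-`m` factor of the
Sturmian word `s_{α,0}` starting at position `n`, where the letter at position `p ≥ 1` is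
`a` iff `{pα} ≥ {-α} = 1 - α`. -/
noncomputable def sturmParikh (α : ℝ) (n m : ℕ) : ℕ × ℕ :=
  (((Finset.range m).filter fun i => 1 - α ≤ Int.fract (((n + i : ℕ) : ℝ) * α)).card,
   ((Finset.range m).filter fun i => Int.fract (((n + i : ℕ) : ℝ) * α) < 1 - α).card)

/-- The factor of `s_{α,0}` of length `k*m` starting at position `n` is an abelian power of
period `m` and exponent `k`. -/
noncomputable def HasAbelianPowerAt (α : ℝ) (n m k : ℕ) : Prop :=
  ∀ j < k, sturmParikh α (n + j * m) m = sturmParikh α n m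

/-!
Write `m α = c + δ` with `c ∈ ℤ`, and `x = {nα}`. The `t`-th block of length `m` read from
position `n` contains `c + ⌊x + (t + 1) δ⌋ - ⌊x + t δ⌋` letters `a`, so an abelian power of
exponent `k` is exactly a run `t ≤ k` along which `⌊x + t δ⌋` is linear in `t`.

For `α = φ - 1 = -ψ` and `m = F_j`, Binet's formula gives `δ = -ψ ^ (j + 1)`: `|δ| = φ ^ -(j + 1)`,
and `δ` has the sign of `(-1) ^ j`. Since `φ` is badly approximable, `|δ| ≤ {nα}` for
`1 ≤ n ≤ F_j`, and also `{nα} ≤ 1 - |δ|` when `j` is odd. From such an `x` a run of length `k`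
forces `(k + 1) |δ| ≤ 1`, i.e. `k ≤ ⌊φ ^ (j + 1)⌋ - 1`, and the run from `n = F_j`, where
`x = {δ}`, reaches this length. Finally `φ ^ (j + 1) = φ F_j + F_{j-1}` and
`φ ^ (j + 1) + ψ ^ (j + 1) = F_{j+1} + F_{j-1}`.
-/

open Real goldenRatio

theorem forall_sub_eq_iff_forall_eq_add_mul {f : ℕ → ℤ} {k : ℕ} :
    (∀ t < k, f (t + 1) - f t = f 1 - f 0) ↔ ∀ t ≤ k, f t = f 0 + t * (f 1 - f 0) := by
  constructor
  · intro h t ht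
    induction t with
    | zero => simp
    | succ t ih =>
      have := h t (by omega)
      have := ih (by omega)
      push_cast
      linarith
  · intro h t ht
    rw [h (t + 1) ht, h t (by omega)]
    push_cast
    ring

section Sturmian

variable {α : ℝ}

theorem floor_add_sub_floor_eq_ite (h0 : 0 ≤ α) (h1 : α < 1) (y : ℝ) :
    ⌊y + α⌋ - ⌊y⌋ = if 1 - α ≤ Int.fract y then 1 else 0 := by
  have hy : y + α = ⌊y⌋ + (Int.fract y + α) := by rw [← add_assoc, Int.floor_add_fract]
  rw [hy, Int.floor_intCast_add, add_sub_cancel_left, Int.floor_eq_iff]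
  have := Int.fract_nonneg y
  have := Int.fract_lt_one y
  split_ifs <;> push_cast <;> constructor <;> linarith

theorem sturmParikh_fst (h0 : 0 ≤ α) (h1 : α < 1) (n m : ℕ) :
    ((sturmParikh α n m).1 : ℤ) = ⌊((n : ℝ) + m) * α⌋ - ⌊(n : ℝ) * α⌋ := by
  let g (i : ℕ) : ℤ := ⌊((n : ℝ) + i) * α⌋
  have hletter (i : ℕ) : (if 1 - α ≤ Int.fract (((n + i : ℕ) : ℝ) * α) then 1 else 0 : ℤ) =
      g (i + 1) - g i := by
    rw [← floor_add_sub_floor_eq_ite h0 h1]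
    simp only [g]
    push_cast
    ring_nf
  calc ((sturmParikh α n m).1 : ℤ)
      = ∑ i ∈ Finset.range m, (if 1 - α ≤ Int.fract (((n + i : ℕ) : ℝ) * α) then 1 else 0 : ℤ) := by
        simp only [sturmParikh, Finset.card_filter]
        push_cast
        rfl
    _ = g m - g 0 := by simp only [hletter, Finset.sum_range_sub]
    _ = _ := by simp [g]

theorem sturmParikh_fst_add_snd (n m : ℕ) :
    (sturmParikh α n m).1 + (sturmParikh α n m).2 = m := by
  simp only [sturmParikh, ← not_le]
  rw [Finset.card_filter_add_card_filter_not, Finset.card_range]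

theorem sturmParikh_eq_iff (h0 : 0 ≤ α) (h1 : α < 1) (n n' m : ℕ) :
    sturmParikh α n' m = sturmParikh α n m ↔
      ⌊((n' : ℝ) + m) * α⌋ - ⌊(n' : ℝ) * α⌋ = ⌊((n : ℝ) + m) * α⌋ - ⌊(n : ℝ) * α⌋ := by
  rw [← sturmParikh_fst h0 h1, ← sturmParikh_fst h0 h1, Nat.cast_inj, Prod.ext_iff]
  have := sturmParikh_fst_add_snd (α := α) n m
  have := sturmParikh_fst_add_snd (α := α) n' m
  omega

theorem floor_mul_eq_of_eq_add_mul {n m t : ℕ} {c : ℤ} {δ y : ℝ} (hm : (m : ℝ) * α = c + δ)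
    (hy : y = n + t * m) :
    ⌊y * α⌋ = ⌊(n : ℝ) * α⌋ + t * c + ⌊Int.fract ((n : ℝ) * α) + t * δ⌋ := by
  have h : y * α = ((⌊(n : ℝ) * α⌋ + t * c : ℤ) : ℝ) + (Int.fract ((n : ℝ) * α) + t * δ) := by
    push_cast
    linear_combination α * hy + t * hm - Int.floor_add_fract ((n : ℝ) * α)
  rw [h, Int.floor_intCast_add]

theorem hasAbelianPowerAt_iff_floor_add_mul (h0 : 0 ≤ α) (h1 : α < 1) {n m k : ℕ} {c : ℤ} {δ : ℝ}
    (hm : (m : ℝ) * α = c + δ) :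
    HasAbelianPowerAt α n m k ↔
      ∀ t ≤ k, ⌊Int.fract ((n : ℝ) * α) + t * δ⌋ = t * ⌊Int.fract ((n : ℝ) * α) + δ⌋ := by
  have hrun := forall_sub_eq_iff_forall_eq_add_mul
    (f := fun t : ℕ => ⌊Int.fract ((n : ℝ) * α) + t * δ⌋) (k := k)
  simp only [Nat.cast_zero, zero_mul, add_zero, Int.floor_fract, sub_zero, zero_add, Nat.cast_one,
    one_mul] at hrun
  rw [← hrun, HasAbelianPowerAt]
  refine forall₂_congr fun t _ => ?_
  rw [sturmParikh_eq_iff h0 h1,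
    floor_mul_eq_of_eq_add_mul (n := n) (t := t + 1) (y := (n + t * m : ℕ) + m) hm
      (by push_cast; ring),
    floor_mul_eq_of_eq_add_mul (n := n) (t := t) (y := (n + t * m : ℕ)) hm (by push_cast; ring),
    floor_mul_eq_of_eq_add_mul (n := n) (t := 1) (y := n + m) hm (by simp)]
  push_cast
  simp only [one_mul]
  constructor <;> intro h <;> linarith

end Sturmian

section Drift

variable {x δ : ℝ} {k : ℕ}

theorem add_one_le_floor_inv_of_pos (hδ : 0 < δ) (hδ2 : δ < 1 / 2) (hx : δ ≤ x) (hx1 : x < 1)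
    (h : ∀ t ≤ k, ⌊x + t * δ⌋ = t * ⌊x + δ⌋) : k + 1 ≤ ⌊δ⁻¹⌋₊ := by
  refine Nat.le_floor ?_
  rw [← one_div, le_div_iff₀ hδ]
  push_cast
  rcases le_or_gt k 1 with hk | hk
  · have : (k : ℝ) ≤ 1 := by exact_mod_cast hk
    nlinarith
  -- `⌊x + t δ⌋` cannot jump twice since `x + 2δ < 2`, so it stays `0` up to `t = k`.
  have h2 := h 2 hk
  have hlight : ⌊x + δ⌋ ≤ 0 := by
    have : ⌊x + (2 : ℕ) * δ⌋ < 2 := Int.floor_lt.mpr (by push_cast; linarith)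
    omega
  have hk0 : ⌊x + k * δ⌋ ≤ 0 := by
    rw [h k le_rfl]
    exact mul_nonpos_of_nonneg_of_nonpos (by positivity) hlight
  have := Int.floor_le_iff.mp hk0
  push_cast at this
  linarith

theorem forall_floor_add_mul_eq_of_forall_eq_zero (h : ∀ t ≤ k, ⌊x + t * δ⌋ = 0) :
    ∀ t ≤ k, ⌊x + t * δ⌋ = t * ⌊x + δ⌋ := by
  intro t ht
  rcases Nat.eq_zero_or_pos t with rfl | ht0
  · simpa using h 0 ht
  · rw [h t ht, show ⌊x + δ⌋ = 0 by simpa using h 1 (by omega), mul_zero]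

theorem forall_floor_add_mul_eq_of_pos (hδ : 0 < δ) (hk : (k + 1) * δ < 1) :
    ∀ t ≤ k, ⌊δ + t * δ⌋ = t * ⌊δ + δ⌋ := by
  refine forall_floor_add_mul_eq_of_forall_eq_zero fun t ht => Int.floor_eq_zero_iff.mpr ⟨?_, ?_⟩
  · positivity
  · have : (t : ℝ) ≤ k := by exact_mod_cast ht
    nlinarith

theorem forall_floor_one_add_add_mul_eq_of_neg (hδ : δ < 0) (hk : (k + 1) * -δ ≤ 1) :
    ∀ t ≤ k, ⌊(1 + δ) + t * δ⌋ = t * ⌊(1 + δ) + δ⌋ := by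
  refine forall_floor_add_mul_eq_of_forall_eq_zero fun t ht => Int.floor_eq_zero_iff.mpr ⟨?_, ?_⟩
  · have : (t : ℝ) ≤ k := by exact_mod_cast ht
    nlinarith
  · have : (0 : ℝ) ≤ t := by positivity
    nlinarith

theorem add_one_le_floor_inv_of_neg (hδ : δ < 0) (hx : -δ ≤ x) (hx1 : x ≤ 1 + δ)
    (h : ∀ t ≤ k, ⌊x + t * δ⌋ = t * ⌊x + δ⌋) : k + 1 ≤ ⌊(-δ)⁻¹⌋₊ := by
  refine Nat.le_floor ?_
  rw [← one_div, le_div_iff₀ (by linarith)]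
  have h0 : ⌊x + δ⌋ = 0 := Int.floor_eq_zero_iff.mpr ⟨by linarith, by linarith⟩
  simp only [h0, mul_zero, Int.floor_eq_zero_iff] at h
  have := (h k le_rfl).1
  push_cast
  linarith

end Drift

theorem neg_goldenConj_pos : 0 < -ψ := neg_pos.mpr goldenConj_neg

theorem neg_goldenConj_lt_one : -ψ < 1 := by linarith [neg_one_lt_goldenConj]

theorem neg_goldenConj_pow_mul_goldenRatio_pow (n : ℕ) : (-ψ) ^ n * φ ^ n = 1 := by
  rw [← mul_pow, neg_mul, goldenConj_mul_goldenRatio, neg_neg, one_pow]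

theorem neg_goldenConj_pow_lt_one {n : ℕ} (hn : n ≠ 0) : (-ψ) ^ n < 1 :=
  pow_lt_one₀ neg_goldenConj_pos.le neg_goldenConj_lt_one hn

theorem inv_neg_goldenConj_pow (n : ℕ) : ((-ψ) ^ n)⁻¹ = φ ^ n :=
  inv_eq_of_mul_eq_one_right (neg_goldenConj_pow_mul_goldenRatio_pow n)

theorem neg_goldenConj_pow_lt_half {n : ℕ} (hn : 2 ≤ n) : (-ψ) ^ n < 1 / 2 := by
  have h2 : (-ψ) ^ 2 < 1 / 2 := by
    rw [neg_sq, goldenConj_sq, goldenConj]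
    linarith [Real.lt_sqrt_of_sq_lt (show (2 : ℝ) ^ 2 < 5 by norm_num)]
  exact (pow_le_pow_of_le_one neg_goldenConj_pos.le neg_goldenConj_lt_one.le hn).trans_lt h2

theorem natCast_fib_mul_sqrt_five (n : ℕ) : (Nat.fib n : ℝ) * √5 = φ ^ n - ψ ^ n := by
  rw [coe_fib_eq, div_mul_cancel₀ _ (by positivity)]

theorem natCast_fib_succ_mul_neg_goldenConj (n : ℕ) :
    (Nat.fib (n + 1) : ℝ) * -ψ = Nat.fib n + -ψ ^ (n + 1) := by
  linear_combination -goldenConj_mul_fib_succ_add_fib n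

theorem goldenRatio_pow_succ_add_goldenConj_pow_succ (n : ℕ) :
    φ ^ (n + 1) + ψ ^ (n + 1) = Nat.fib (n + 2) + Nat.fib n := by
  rw [Nat.fib_add_two]
  push_cast
  linear_combination (-(Nat.fib (n + 1) : ℝ)) * goldenRatio_add_goldenConj -
    goldenRatio_mul_fib_succ_add_fib n - goldenConj_mul_fib_succ_add_fib n

/-- The norm form `p² - p n - n²` of `ℤ[φ]` is a nonzero integer. -/
theorem one_le_abs_mul_neg_goldenConj_sub_mul {p : ℕ} (hp : 0 < p) (n : ℤ) :
    1 ≤ |(p * -ψ - n) * (p * φ + n)| := by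
  have hnorm : (p * -ψ - n) * (p * φ + n) = ((p ^ 2 - p * n - n ^ 2 : ℤ) : ℝ) := by
    push_cast
    linear_combination (-(p : ℝ) ^ 2) * goldenConj_mul_goldenRatio -
      (p * n : ℝ) * goldenRatio_add_goldenConj
  have hψ : (p * -ψ - n : ℝ) ≠ 0 :=
    ((goldenConj_irrational.neg.natCast_mul hp.ne').sub_intCast n).ne_zero
  have hφ : (p * φ + n : ℝ) ≠ 0 :=
    ((goldenRatio_irrational.natCast_mul hp.ne').add_intCast n).ne_zero
  have hz : (p ^ 2 - p * n - n ^ 2 : ℤ) ≠ 0 := by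
    intro h
    exact mul_ne_zero hψ hφ (by rw [hnorm, h, Int.cast_zero])
  rw [hnorm, ← Int.cast_abs]
  exact_mod_cast Int.one_le_abs hz

theorem natCast_mul_sqrt_five_le {t p : ℕ} (hpt : p ≤ Nat.fib t) :
    (p : ℝ) * √5 ≤ φ ^ t - ψ ^ t := by
  rw [← natCast_fib_mul_sqrt_five]
  exact mul_le_mul_of_nonneg_right (by exact_mod_cast hpt) (Real.sqrt_nonneg 5)

theorem neg_goldenConj_pow_le_fract {t p : ℕ} (hp : 0 < p) (hpt : p ≤ Nat.fib t) :
    (-ψ) ^ t ≤ Int.fract (p * -ψ) := by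
  set e := (-ψ) ^ t
  set d := Int.fract ((p : ℝ) * -ψ)
  set s := (p : ℝ) * √5
  by_contra! hde
  have he0 : 0 ≤ e := pow_nonneg neg_goldenConj_pos.le t
  have he1 : e ≤ 1 := pow_le_one₀ neg_goldenConj_pos.le neg_goldenConj_lt_one.le
  have hs : 2 < s := by
    have : (1 : ℝ) ≤ p := by exact_mod_cast hp
    nlinarith [Real.lt_sqrt_of_sq_lt (show (2 : ℝ) ^ 2 < 5 by norm_num)]
  have hψt : -e ≤ ψ ^ t := by
    simpa [e, abs_pow, abs_of_neg goldenConj_neg] using neg_abs_le (ψ ^ t)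
  have hnorm := one_le_abs_mul_neg_goldenConj_sub_mul hp ⌊(p : ℝ) * -ψ⌋
  rw [Int.self_sub_floor, show (p : ℝ) * φ + ⌊(p : ℝ) * -ψ⌋ = s - d by
    linear_combination Int.floor_add_fract ((p : ℝ) * -ψ) + (p : ℝ) * goldenRatio_sub_goldenConj,
    abs_of_nonneg (mul_nonneg (Int.fract_nonneg _) (by linarith))] at hnorm
  refine lt_irrefl (1 : ℝ) ?_
  -- `y ↦ y (s - y)` is increasing on `[0, s / 2]`
  calc 1 ≤ d * (s - d) := hnorm
    _ < e * (s - e) := by nlinarith [mul_pos (sub_pos.2 hde) (show 0 < s - d - e by linarith)]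
    _ ≤ e * (φ ^ t - ψ ^ t - e) :=
      mul_le_mul_of_nonneg_left (by linarith [natCast_mul_sqrt_five_le hpt]) he0
    _ ≤ e * φ ^ t := mul_le_mul_of_nonneg_left (by linarith) he0
    _ = 1 := neg_goldenConj_pow_mul_goldenRatio_pow t

theorem fract_le_one_sub_neg_goldenConj_pow {t p : ℕ} (ht : Even t) (hp : 0 < p)
    (hpt : p ≤ Nat.fib t) : Int.fract (p * -ψ) ≤ 1 - (-ψ) ^ t := by
  set e := (-ψ) ^ t
  set d := 1 - Int.fract ((p : ℝ) * -ψ)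
  set s := (p : ℝ) * √5
  by_contra! hde
  have he0 : 0 ≤ e := pow_nonneg neg_goldenConj_pos.le t
  have hd0 : 0 ≤ d := by linarith [Int.fract_lt_one ((p : ℝ) * -ψ)]
  have hψt : ψ ^ t = e := (ht.neg_pow ψ).symm
  have hnorm := one_le_abs_mul_neg_goldenConj_sub_mul hp (⌊(p : ℝ) * -ψ⌋ + 1)
  have hfloor := Int.floor_add_fract ((p : ℝ) * -ψ)
  push_cast at hnorm
  rw [show (p : ℝ) * -ψ - (⌊(p : ℝ) * -ψ⌋ + 1) = -d by linear_combination -hfloor,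
    show (p : ℝ) * φ + (⌊(p : ℝ) * -ψ⌋ + 1) = s + d by
      linear_combination hfloor + (p : ℝ) * goldenRatio_sub_goldenConj,
    neg_mul, abs_neg, abs_of_nonneg (mul_nonneg hd0 (by positivity))] at hnorm
  refine lt_irrefl (1 : ℝ) ?_
  calc 1 ≤ d * (s + d) := hnorm
    _ < e * (s + e) := by
      nlinarith [mul_pos (show 0 < e - d by linarith) (show 0 < s + d + e by positivity)]
    _ ≤ e * (φ ^ t - ψ ^ t + e) :=
      mul_le_mul_of_nonneg_left (by linarith [natCast_mul_sqrt_five_le hpt]) he0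
    _ = 1 := by rw [hψt, sub_add_cancel]; exact neg_goldenConj_pow_mul_goldenRatio_pow t

theorem natCast_floor_goldenRatio_pow_lt (n : ℕ) : (⌊φ ^ (n + 1)⌋₊ : ℝ) < φ ^ (n + 1) := by
  have hirr : Irrational (φ ^ (n + 1)) := by
    rw [← goldenRatio_mul_fib_succ_add_fib]
    exact (goldenRatio_irrational.mul_natCast (Nat.fib_pos.mpr n.succ_pos).ne').add_natCast _
  exact (Nat.floor_le (by positivity)).lt_of_ne (hirr.ne_nat _).symm

theorem floor_goldenRatio_pow_succ (n : ℕ) :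
    ⌊φ ^ (n + 1)⌋₊ =
      if Even n then Nat.fib (n + 2) + Nat.fib n else Nat.fib (n + 2) + Nat.fib n - 1 := by
  have hL := goldenRatio_pow_succ_add_goldenConj_pow_succ n
  have hε0 := pow_pos neg_goldenConj_pos (n + 1)
  have hε1 := neg_goldenConj_pow_lt_one n.add_one_ne_zero
  have hfib : 1 ≤ Nat.fib (n + 2) := Nat.fib_pos.mpr (by omega)
  split_ifs with hn
  · rw [(hn.add_one).neg_pow] at hε0 hε1
    rw [Nat.floor_eq_iff (by positivity)]
    push_cast
    constructor <;> linarith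
  · rw [(Nat.not_even_iff_odd.mp hn).add_one.neg_pow] at hε0 hε1
    rw [Nat.floor_eq_iff (by positivity), Nat.cast_sub (by omega)]
    push_cast
    constructor <;> linarith

section FibonacciWord

variable {j : ℕ}

theorem add_one_le_floor_goldenRatio_pow {i k : ℕ} (hj : 0 < j) (hi : 0 < i)
    (hij : i ≤ Nat.fib (j + 1)) (h : HasAbelianPowerAt (-ψ) i (Nat.fib (j + 1)) k) :
    k + 1 ≤ ⌊φ ^ (j + 1)⌋₊ := by
  rw [hasAbelianPowerAt_iff_floor_add_mul neg_goldenConj_pos.le neg_goldenConj_lt_one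
    (c := Nat.fib j) (by exact_mod_cast natCast_fib_succ_mul_neg_goldenConj j)] at h
  have hε0 := pow_pos neg_goldenConj_pos (j + 1)
  have hx := neg_goldenConj_pow_le_fract hi hij
  rw [← inv_neg_goldenConj_pow]
  rcases j.even_or_odd with hj2 | hj2
  · rw [← hj2.add_one.neg_pow ψ] at h
    exact add_one_le_floor_inv_of_pos hε0 (neg_goldenConj_pow_lt_half (by omega)) hx
      (Int.fract_lt_one _) h
  · rw [← hj2.add_one.neg_pow ψ] at h
    simpa using add_one_le_floor_inv_of_neg (neg_neg_of_pos hε0) (by rwa [neg_neg])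
      (by simpa [← sub_eq_add_neg] using fract_le_one_sub_neg_goldenConj_pow hj2.add_one hi hij) h

theorem hasAbelianPowerAt_fib_succ :
    HasAbelianPowerAt (-ψ) (Nat.fib (j + 1)) (Nat.fib (j + 1)) (⌊φ ^ (j + 1)⌋₊ - 1) := by
  have hm := natCast_fib_succ_mul_neg_goldenConj j
  rw [hasAbelianPowerAt_iff_floor_add_mul neg_goldenConj_pos.le neg_goldenConj_lt_one
    (c := Nat.fib j) (by exact_mod_cast hm), hm, Int.fract_natCast_add]
  have hε0 := pow_pos neg_goldenConj_pos (j + 1)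
  have hfract : Int.fract ((-ψ) ^ (j + 1)) = (-ψ) ^ (j + 1) :=
    Int.fract_eq_self.mpr ⟨hε0.le, neg_goldenConj_pow_lt_one j.add_one_ne_zero⟩
  have hN : (((⌊φ ^ (j + 1)⌋₊ - 1 : ℕ) : ℝ) + 1) * (-ψ) ^ (j + 1) < 1 := by
    have h1 : 1 ≤ ⌊φ ^ (j + 1)⌋₊ := Nat.le_floor (by simpa using one_le_pow₀ one_lt_goldenRatio.le)
    rw [Nat.cast_sub h1, Nat.cast_one, sub_add_cancel,
      ← neg_goldenConj_pow_mul_goldenRatio_pow (j + 1), mul_comm]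
    exact mul_lt_mul_of_pos_left (natCast_floor_goldenRatio_pow_lt j) hε0
  rcases j.even_or_odd with hj2 | hj2
  · rw [← hj2.add_one.neg_pow ψ, hfract]
    exact forall_floor_add_mul_eq_of_pos hε0 hN
  · rw [← hj2.add_one.neg_pow ψ, Int.fract_neg (by rw [hfract]; exact hε0.ne'), hfract,
      sub_eq_add_neg]
    exact forall_floor_one_add_add_mul_eq_of_neg (neg_neg_of_pos hε0) (by rw [neg_neg]; exact hN.le)

end FibonacciWord

/-- For `j > 1`, in the Fibonacci infinite word (the Sturmian word of
slope `α = φ - 1`), the longest abelian power of period `F j` starting at a position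
`i ≤ F j` has an occurrence starting at position `F j`, and its exponent equals
`⌊φ F_j + F_{j-1}⌋ - 1`, which is `F_{j+1} + F_{j-1} - 1` for even `j` and
`F_{j+1} + F_{j-1} - 2` for odd `j`. -/
theorem fibonacci_longest_abelian_power (j : ℕ) (hj : 1 < j) :
    IsGreatest
      {k : ℕ | ∃ i : ℕ, 1 ≤ i ∧ i ≤ F j ∧
        HasAbelianPowerAt ((Real.sqrt 5 - 1) / 2) i (F j) k}
      (⌊(1 + Real.sqrt 5) / 2 * (F j : ℝ) + (F (j - 1) : ℝ)⌋₊ - 1) ∧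
    HasAbelianPowerAt ((Real.sqrt 5 - 1) / 2) (F j) (F j)
      (⌊(1 + Real.sqrt 5) / 2 * (F j : ℝ) + (F (j - 1) : ℝ)⌋₊ - 1) ∧
    ⌊(1 + Real.sqrt 5) / 2 * (F j : ℝ) + (F (j - 1) : ℝ)⌋₊ - 1 =
      (if Even j then F (j + 1) + F (j - 1) - 1 else F (j + 1) + F (j - 1) - 2) := by
  have hFpred : F (j - 1) = Nat.fib j := by rw [F, Nat.sub_add_cancel hj.le]
  have hα : (Real.sqrt 5 - 1) / 2 = -ψ := by rw [goldenConj]; ring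
  have hφ : (1 + Real.sqrt 5) / 2 * (F j : ℝ) + (F (j - 1) : ℝ) = φ ^ (j + 1) := by
    rw [hFpred, F, ← goldenRatio_mul_fib_succ_add_fib]
  rw [hα, hφ]
  refine ⟨⟨⟨F j, Nat.fib_pos.mpr j.succ_pos, le_rfl, hasAbelianPowerAt_fib_succ⟩, ?_⟩,
    hasAbelianPowerAt_fib_succ, ?_⟩
  · rintro k ⟨i, hi, hij, hk⟩
    have := add_one_le_floor_goldenRatio_pow (by omega) hi hij hk
    omega
  · rw [floor_goldenRatio_pow_succ, hFpred, show F (j + 1) = Nat.fib (j + 2) from rfl]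
    split_ifs <;> omega
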